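/- Let n ≥ 1. In ℂ[x_0,x_1,…,x_n], let QSym(X) denote the subspace of polynomials that do not involve x_0 and are quasi-symmetric in the ordered variables x_1,…,x_n, and let QSym(x_0,X) denote the subspace of polynomials quasi-symmetric in the ordered variables x_0,x_1,…,x_n; let BQSym = QSym(X) + QSym(x_0,X) (sum of subspaces) and BQSym^+ its elements with zero constant term. Then the quotient ring ℂ[x_0,x_1,…,x_n]/⟨BQSym^+⟩ is isomorphic as a ℂ-algebra to ℂ[x_1,…,x_n]/⟨QSym_n^+⟩, where QSym_n^+ is the set of quasi-symmetric polynomials in x_1,…,x_n with zero constant term. -/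
import Mathlib

open MvPolynomial

/-- The composition obtained from a vector by deleting its zero entries. -/
def comp {k : ℕ} (ν : Fin k → ℕ) : List ℕ := (List.ofFn ν).filter (fun x => x ≠ 0)

/-- A polynomial is quasi-symmetric (in its ordered list of variables) if monomials whose
exponent vectors have the same underlying composition have equal coefficients. -/
def IsQuasiSym {k : ℕ} (P : MvPolynomial (Fin k) ℂ) : Prop :=
  ∀ ν μ : Fin k → ℕ, comp ν = comp μ →
    P.coeff (Finsupp.equivFunOnFinite.symm ν) = P.coeff (Finsupp.equivFunOnFinite.symm μ)

/-- `QSym(X)` inside `ℂ[x₀,x₁,…,xₙ]`: polynomials not involving `x₀` that are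
quasi-symmetric in the ordered variables `x₁,…,xₙ`. -/
def QSymX (n : ℕ) : Set (MvPolynomial (Fin (n + 1)) ℂ) :=
  {P | ∃ Q : MvPolynomial (Fin n) ℂ, IsQuasiSym Q ∧ P = rename Fin.succ Q}

/-- Chow's `BQSym(x₀,X) = QSym(X) + QSym(x₀,X)` (sum of subspaces, as a set). -/
def BQSym (n : ℕ) : Set (MvPolynomial (Fin (n + 1)) ℂ) :=
  {P | ∃ Q R : MvPolynomial (Fin (n + 1)) ℂ,
    Q ∈ QSymX n ∧ IsQuasiSym R ∧ P = Q + R}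

namespace Stmt15Aux

/-- substitute `x₀ ↦ 0`. -/
noncomputable def f (n : ℕ) : MvPolynomial (Fin (n + 1)) ℂ →ₐ[ℂ] MvPolynomial (Fin n) ℂ :=
  aeval (Fin.cases 0 X)

lemma f_rename (n : ℕ) (Q : MvPolynomial (Fin n) ℂ) : f n (rename Fin.succ Q) = Q := by
  have : (f n).comp (rename (R := ℂ) Fin.succ) = AlgHom.id ℂ _ := by
    apply MvPolynomial.algHom_ext
    intro i
    simp [f]
  calc f n (rename Fin.succ Q) = ((f n).comp (rename Fin.succ)) Q := rfl
    _ = Q := by rw [this]; rfl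

lemma comp_cases {n : ℕ} (ν : Fin n → ℕ) : comp (Fin.cases 0 ν : Fin (n+1) → ℕ) = comp ν := by
  simp [comp, List.ofFn_succ]

lemma cons_symm {n : ℕ} (ν : Fin n → ℕ) :
    Finsupp.cons 0 (Finsupp.equivFunOnFinite.symm ν)
      = Finsupp.equivFunOnFinite.symm (Fin.cases 0 ν) := by
  ext i
  refine Fin.cases ?_ ?_ i <;> simp [Finsupp.cons_zero, Finsupp.cons_succ]

lemma coeff_f {n : ℕ} (P : MvPolynomial (Fin (n+1)) ℂ) (ν : Fin n → ℕ) :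
    (f n P).coeff (Finsupp.equivFunOnFinite.symm ν)
      = P.coeff (Finsupp.equivFunOnFinite.symm (Fin.cases 0 ν)) := by
  have hf : f n P = Polynomial.eval 0 (finSuccEquiv ℂ n P) := by
    have : (Polynomial.evalRingHom (0 : MvPolynomial (Fin n) ℂ)).comp
        ((finSuccEquiv ℂ n : MvPolynomial (Fin (n+1)) ℂ →+* Polynomial (MvPolynomial (Fin n) ℂ)))
        = (f n : MvPolynomial (Fin (n+1)) ℂ →+* MvPolynomial (Fin n) ℂ) := by
      apply MvPolynomial.ringHom_ext
      · intro r
        have : (finSuccEquiv ℂ n) (C r) = Polynomial.C (C r) := by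
          simp [finSuccEquiv_apply]
        simp [f, this]
      · intro i
        refine Fin.cases ?_ ?_ i
        · simp [f, finSuccEquiv_X_zero]
        · intro j; simp [f, finSuccEquiv_X_succ]
    have := congrArg (fun φ => φ P) this
    simpa using this.symm
  rw [hf, ← Polynomial.coeff_zero_eq_eval_zero, finSuccEquiv_coeff_coeff, cons_symm]

lemma isQuasiSym_f {n : ℕ} {P : MvPolynomial (Fin (n+1)) ℂ} (hP : IsQuasiSym P) :
    IsQuasiSym (f n P) := by
  intro ν μ h
  rw [coeff_f, coeff_f]
  exact hP _ _ (by rw [comp_cases, comp_cases, h])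

lemma coeff_zero_f {n : ℕ} (P : MvPolynomial (Fin (n+1)) ℂ) :
    (f n P).coeff 0 = P.coeff 0 := by
  have := coeff_f P 0
  have h0 : (Finsupp.equivFunOnFinite.symm (0 : Fin n → ℕ)) = 0 := by ext i; simp
  have h1 : (Fin.cases 0 (0 : Fin n → ℕ) : Fin (n+1) → ℕ) = 0 := by
    funext i; refine Fin.cases rfl (fun j => rfl) i
  have h2 : (Finsupp.equivFunOnFinite.symm (Fin.cases 0 (0 : Fin n → ℕ) : Fin (n+1) → ℕ)) = 0 := by
    rw [h1]; ext i; simp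
  rw [h0, h2] at this
  exact this

lemma comp_eq_nil {k : ℕ} {ν : Fin k → ℕ} : comp ν = [] ↔ ν = 0 := by
  constructor
  · intro h
    funext i
    by_contra hi
    have hmem : ν i ∈ (List.ofFn ν).filter (fun x => x ≠ 0) := by
      rw [List.mem_filter]
      refine ⟨?_, by simpa using hi⟩
      rw [List.mem_ofFn]
      exact ⟨i, rfl⟩
    rw [show (List.ofFn ν).filter (fun x => x ≠ 0) = comp ν from rfl, h] at hmem
    simp at hmem
  · rintro rfl
    simp [comp]

lemma symm_eq_zero {k : ℕ} {ν : Fin k → ℕ} :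
    Finsupp.equivFunOnFinite.symm ν = 0 ↔ ν = 0 := by
  rw [Equiv.symm_apply_eq]
  constructor
  · rintro rfl; rfl
  · rintro rfl; rfl

lemma isQuasiSym_C {k : ℕ} (c : ℂ) : IsQuasiSym (C c : MvPolynomial (Fin k) ℂ) := by
  intro ν μ h
  rw [coeff_C, coeff_C]
  have key : ν = 0 ↔ μ = 0 := by
    rw [← comp_eq_nil (ν := ν), ← comp_eq_nil (ν := μ), h]
  have h2 : (0 = Finsupp.equivFunOnFinite.symm ν) ↔ ν = 0 := eq_comm.trans symm_eq_zero
  have h3 : (0 = Finsupp.equivFunOnFinite.symm μ) ↔ μ = 0 := eq_comm.trans symm_eq_zero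
  by_cases hν : ν = 0
  · rw [if_pos (h2.mpr hν), if_pos (h3.mpr (key.mp hν))]
  · rw [if_neg (fun hc => hν (h2.mp hc)), if_neg (fun hc => hν (key.mpr (h3.mp hc)))]

lemma isQuasiSym_add {k : ℕ} {P Q : MvPolynomial (Fin k) ℂ}
    (hP : IsQuasiSym P) (hQ : IsQuasiSym Q) : IsQuasiSym (P + Q) := by
  intro ν μ h
  simp only [coeff_add, hP ν μ h, hQ ν μ h]

lemma isQuasiSym_sub {k : ℕ} {P Q : MvPolynomial (Fin k) ℂ}
    (hP : IsQuasiSym P) (hQ : IsQuasiSym Q) : IsQuasiSym (P - Q) := by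
  intro ν μ h
  simp only [coeff_sub, hP ν μ h, hQ ν μ h]

lemma isQuasiSym_zero {k : ℕ} : IsQuasiSym (0 : MvPolynomial (Fin k) ℂ) :=
  fun _ _ _ => by simp

/-- the sum of all variables is quasi-symmetric -/
lemma isQuasiSym_S (k : ℕ) : IsQuasiSym (∑ i : Fin k, X i : MvPolynomial (Fin k) ℂ) := by
  have key : ∀ ν : Fin k → ℕ,
      (∑ i : Fin k, X i : MvPolynomial (Fin k) ℂ).coeff (Finsupp.equivFunOnFinite.symm ν)
        = if (comp ν).sum = 1 then 1 else 0 := by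
    intro ν
    have hsum : (comp ν).sum = ∑ i, ν i := by
      have h1 : ((List.ofFn ν).filter (fun x => x ≠ 0)).sum = (List.ofFn ν).sum := by
        induction (List.ofFn ν) with
        | nil => simp
        | cons a l ih =>
          by_cases ha : a = 0
          · subst ha
            rw [List.filter_cons_of_neg (by simp), List.sum_cons, ih, zero_add]
          · rw [List.filter_cons_of_pos (by simpa using ha), List.sum_cons, List.sum_cons, ih]
      rw [comp, h1, List.sum_ofFn]
    rw [hsum]
    rw [coeff_sum]
    simp only [coeff_X']
    by_cases h1 : ∑ i, ν i = 1
    · rw [if_pos h1]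
      -- there is a unique i₀ with ν i₀ = 1, others 0
      obtain ⟨i₀, hi₀⟩ : ∃ i₀, ν i₀ ≠ 0 := by
        by_contra hc
        push_neg at hc
        rw [Finset.sum_eq_zero (fun i _ => hc i)] at h1
        exact one_ne_zero h1.symm
      have hrest : ∑ i ∈ Finset.univ.erase i₀, ν i = 0 ∧ ν i₀ = 1 := by
        have := Finset.add_sum_erase Finset.univ ν (Finset.mem_univ i₀)
        rw [← this] at h1
        omega
      have hν : ν = Pi.single i₀ 1 := by
        funext j
        by_cases hj : j = i₀
        · rw [hj, Pi.single_eq_same, hrest.2]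
        · rw [Pi.single_eq_of_ne hj]
          exact Finset.sum_eq_zero_iff.mp hrest.1 j (Finset.mem_erase.mpr ⟨hj, Finset.mem_univ j⟩)
      have hm : ∀ i : Fin k, (Finsupp.single i 1 = Finsupp.equivFunOnFinite.symm ν) ↔ i = i₀ := by
        intro i
        constructor
        · intro he
          by_contra hne
          have := congrArg (fun m => m i₀) he
          simp only [Finsupp.single_apply, if_neg hne] at this
          rw [show (Finsupp.equivFunOnFinite.symm ν) i₀ = ν i₀ from rfl, hrest.2] at this
          exact one_ne_zero this.symm
        · rintro rfl
          ext j
          rw [show (Finsupp.equivFunOnFinite.symm ν) j = ν j from rfl, hν]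
          simp only [Finsupp.single_apply, Pi.single_apply]
          rcases eq_or_ne j i with rfl | hj
          · simp
          · rw [if_neg hj, if_neg (Ne.symm hj)]
      simp only [hm]
      simp
    · rw [if_neg h1]
      apply Finset.sum_eq_zero
      intro i _
      rw [if_neg]
      intro he
      apply h1
      have : ν = Pi.single i 1 := by
        funext j
        have := congrArg (fun m => m j) he
        simp only [Finsupp.single_apply] at this
        rw [show (Finsupp.equivFunOnFinite.symm ν) j = ν j from rfl] at this
        rw [Pi.single_apply, ← this]
        rcases eq_or_ne i j with rfl | hij
        · simp
        · rw [if_neg hij, if_neg (Ne.symm hij)]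
      rw [this]
      simp [Finset.sum_pi_single]
  intro ν μ h
  rw [key, key, h]

lemma coeff_zero_rename {n : ℕ} (P : MvPolynomial (Fin n) ℂ) :
    (rename (Fin.succ : Fin n → Fin (n+1)) P).coeff 0 = P.coeff 0 := by
  rw [show (coeff 0 : MvPolynomial (Fin (n+1)) ℂ → ℂ) = constantCoeff from constantCoeff_eq.symm,
    show (coeff 0 : MvPolynomial (Fin n) ℂ → ℂ) = constantCoeff from constantCoeff_eq.symm]
  exact constantCoeff_rename _ P

lemma X0_mem (n : ℕ) :
    (X 0 : MvPolynomial (Fin (n + 1)) ℂ) ∈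
      Ideal.span {P : MvPolynomial (Fin (n + 1)) ℂ | P ∈ BQSym n ∧ P.coeff 0 = 0} := by
  set S : MvPolynomial (Fin (n + 1)) ℂ := ∑ i, X i with hS
  set T : MvPolynomial (Fin (n + 1)) ℂ := rename Fin.succ (∑ i : Fin n, X i) with hT
  have hSc : S.coeff 0 = 0 := by
    rw [hS, coeff_sum]
    apply Finset.sum_eq_zero
    intro i _
    rw [coeff_X', if_neg (fun hc => one_ne_zero (Finsupp.single_eq_zero.mp hc))]
  have hSmem : S ∈ Ideal.span {P : MvPolynomial (Fin (n + 1)) ℂ | P ∈ BQSym n ∧ P.coeff 0 = 0} := by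
    apply Ideal.subset_span
    exact ⟨⟨0, S, ⟨0, isQuasiSym_zero, by rw [map_zero]⟩, isQuasiSym_S _, (zero_add S).symm⟩, hSc⟩
  have hTmem : T ∈ Ideal.span {P : MvPolynomial (Fin (n + 1)) ℂ | P ∈ BQSym n ∧ P.coeff 0 = 0} := by
    apply Ideal.subset_span
    refine ⟨⟨T, 0, ⟨∑ i : Fin n, X i, isQuasiSym_S _, hT⟩, isQuasiSym_zero, (add_zero T).symm⟩, ?_⟩
    rw [hT, coeff_zero_rename]
    rw [coeff_sum]
    apply Finset.sum_eq_zero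
    intro i _
    rw [coeff_X', if_neg (fun hc => one_ne_zero (Finsupp.single_eq_zero.mp hc))]
  have hX0 : (X 0 : MvPolynomial (Fin (n + 1)) ℂ) = S - T := by
    rw [hS, hT, map_sum, Fin.sum_univ_succ]
    simp [rename_X]
  rw [hX0]
  exact sub_mem hSmem hTmem

lemma sub_mem_span_X0 (n : ℕ) (P : MvPolynomial (Fin (n+1)) ℂ) :
    P - rename Fin.succ (f n P) ∈ Ideal.span {(X 0 : MvPolynomial (Fin (n+1)) ℂ)} := by
  induction P using MvPolynomial.induction_on with
  | C a => simp [f]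
  | add p q hp hq =>
    have h : p + q - rename Fin.succ (f n (p + q))
        = (p - rename Fin.succ (f n p)) + (q - rename Fin.succ (f n q)) := by
      rw [map_add, map_add]; ring
    rw [h]; exact add_mem hp hq
  | mul_X p i hp =>
    refine Fin.cases ?_ ?_ i
    · have h : f n (p * X 0) = 0 := by rw [map_mul]; simp [f]
      rw [h, map_zero, sub_zero]
      exact Ideal.mul_mem_left _ p (Ideal.subset_span rfl)
    · intro j
      have h : rename Fin.succ (f n (p * X j.succ)) = rename Fin.succ (f n p) * X j.succ := by
        rw [map_mul, map_mul]
        congr 1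
        rw [show f n (X j.succ) = X j from by simp [f], rename_X]
      rw [h]
      have h2 : p * X j.succ - rename Fin.succ (f n p) * X j.succ
          = (p - rename Fin.succ (f n p)) * X j.succ := by ring
      rw [h2]
      exact Ideal.mul_mem_right _ _ hp

end Stmt15Aux

open Stmt15Aux in
theorem stmt15 (n : ℕ) (hn : 1 ≤ n) :
    Nonempty
      ((MvPolynomial (Fin (n + 1)) ℂ ⧸
          Ideal.span {P : MvPolynomial (Fin (n + 1)) ℂ | P ∈ BQSym n ∧ P.coeff 0 = 0})
        ≃ₐ[ℂ]
       (MvPolynomial (Fin n) ℂ ⧸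
          Ideal.span {P : MvPolynomial (Fin n) ℂ | IsQuasiSym P ∧ P.coeff 0 = 0})) := by
  set I := Ideal.span {P : MvPolynomial (Fin (n + 1)) ℂ | P ∈ BQSym n ∧ P.coeff 0 = 0} with hI
  set J := Ideal.span {P : MvPolynomial (Fin n) ℂ | IsQuasiSym P ∧ P.coeff 0 = 0} with hJ
  have hIJ : I ≤ J.comap (f n) := by
    rw [hI, Ideal.span_le]
    rintro P ⟨⟨Q, R, ⟨Q', hQ', rfl⟩, hR, rfl⟩, hc0⟩
    have hfP : f n (rename Fin.succ Q' + R) = Q' + f n R := by rw [map_add, f_rename]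
    show f n (rename Fin.succ Q' + R) ∈ J
    rw [hfP]
    have hconst : Q'.coeff 0 + (f n R).coeff 0 = 0 := by
      have h1 : (Q' + f n R).coeff 0 = 0 := by
        rw [← hfP, coeff_zero_f]; exact hc0
      simpa [coeff_add] using h1
    have hCzero : C (Q'.coeff 0) + C ((f n R).coeff 0) = (0 : MvPolynomial (Fin n) ℂ) := by
      rw [← map_add, hconst, map_zero]
    have key : Q' + f n R
        = (Q' - C (Q'.coeff 0)) + (f n R - C ((f n R).coeff 0)) := by
      rw [sub_add_sub_comm, hCzero, sub_zero]
    rw [key]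
    refine add_mem (Ideal.subset_span ⟨isQuasiSym_sub hQ' (isQuasiSym_C _), ?_⟩)
      (Ideal.subset_span ⟨isQuasiSym_sub (isQuasiSym_f hR) (isQuasiSym_C _), ?_⟩) <;>
      simp [coeff_sub, coeff_C]
  have hJI : J ≤ I.comap (rename (Fin.succ : Fin n → Fin (n+1)) :
      MvPolynomial (Fin n) ℂ →ₐ[ℂ] MvPolynomial (Fin (n+1)) ℂ) := by
    rw [hJ, Ideal.span_le]
    rintro P ⟨hq, h0⟩
    show rename Fin.succ P ∈ I
    apply Ideal.subset_span
    exact ⟨⟨rename Fin.succ P, 0, ⟨P, hq, rfl⟩, isQuasiSym_zero, (add_zero _).symm⟩,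
      by rw [coeff_zero_rename]; exact h0⟩
  let F := Ideal.quotientMapₐ J (f n) hIJ
  let G := Ideal.quotientMapₐ I (rename (Fin.succ : Fin n → Fin (n+1)) :
      MvPolynomial (Fin n) ℂ →ₐ[ℂ] MvPolynomial (Fin (n+1)) ℂ) hJI
  refine ⟨AlgEquiv.ofAlgHom F G ?_ ?_⟩
  · apply AlgHom.ext
    intro x
    obtain ⟨P, rfl⟩ := Ideal.Quotient.mk_surjective x
    show F (G (Ideal.Quotient.mk J P)) = Ideal.Quotient.mk J P
    rw [show (Ideal.Quotient.mk J P) = Ideal.Quotient.mkₐ ℂ J P from rfl]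
    simp only [F, G, Ideal.Quotient.mkₐ_eq_mk, Ideal.quotient_map_mkₐ, Ideal.Quotient.mkₐ_eq_mk]
    rw [f_rename]
  · apply AlgHom.ext
    intro x
    obtain ⟨P, rfl⟩ := Ideal.Quotient.mk_surjective x
    show G (F (Ideal.Quotient.mk I P)) = Ideal.Quotient.mk I P
    simp only [F, G, Ideal.quotient_map_mkₐ, Ideal.Quotient.mkₐ_eq_mk]
    rw [Ideal.Quotient.eq]
    have hX0le : Ideal.span {(X 0 : MvPolynomial (Fin (n+1)) ℂ)} ≤ I := by
      rw [Ideal.span_le, Set.singleton_subset_iff]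
      exact X0_mem n
    have := hX0le (sub_mem_span_X0 n P)
    have h2 : rename Fin.succ (f n P) - P = -(P - rename Fin.succ (f n P)) := by ring
    rw [h2]
    exact neg_mem this
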